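/- arXiv:1801.05592 — 4 statements merged into one kernel-verified Lean document; each statement's English description precedes it below -/
import Mathlib

section
/- Let W be the Virasoro-like Lie algebra with bracket [E(m), E(n)] = det(n; m)·E(m+n) for m, n ∈ ℤ² \ {0}. For any fixed c3, c4 ∈ ℂ, the bilinear map ψ defined by ψ(E(m), E(n)) = δ_{m+n, 0}·(m1·c3 + m2·c4) (where m = (m1, m2)) is a 2-cocycle on W, i.e., ψ is skew-symmetric and satisfies ψ([x, y], z) + ψ([y, z], x) + ψ([z, x], y) = 0 for all x, y, z ∈ W. -/
/-- det((x1,x2);(y1,y2)) = x1·y2 − x2·y1. -/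
def ddet (n m : ℤ × ℤ) : ℤ := n.1 * m.2 - n.2 * m.1

noncomputable section

/-- The basis vectors `E(m)` of the Virasoro-like algebra `W`, realized in the free
ℂ-vector space on ℤ², with `E(0) := 0`. -/
def Efun (m : ℤ × ℤ) : (ℤ × ℤ) →₀ ℂ :=
  if m = 0 then 0 else Finsupp.single m 1

/-- The bracket `[E(m), E(n)] = det(n; m)·E(m+n)` of the Virasoro-like algebra,
extended bilinearly. -/
def vbr (x y : (ℤ × ℤ) →₀ ℂ) : (ℤ × ℤ) →₀ ℂ :=
  x.sum fun m a => y.sum fun n b => (a * b * (ddet n m : ℂ)) • Efun (m + n)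

/-- The bilinear form `ψ(E(m), E(n)) = δ_{m+n,0}·(m1·c3 + m2·c4)` extended bilinearly. -/
def psi (c3 c4 : ℂ) (x y : (ℤ × ℤ) →₀ ℂ) : ℂ :=
  x.sum fun m a => y.sum fun n b =>
    a * b * (if m + n = 0 then (m.1 : ℂ) * c3 + (m.2 : ℂ) * c4 else 0)

/-! Both identities are additive in each argument, so it suffices to check them on the vectors
`single m a`. With `ℓ(m) = m.1 * c3 + m.2 * c4`, which is additive in `m`, skew-symmetry on such
vectors is `ℓ(-n) = -ℓ(n)`. In the cyclic sum only `m + n + p = 0` contributes; substituting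
`p = -(m + n)` it becomes `det(n,m) ℓ(-p) + det(p,n) ℓ(-m) + det(m,p) ℓ(-n)`, which vanishes because
all three determinants equal `det(n,m)` and `ℓ(m + n + p) = 0`. -/

theorem Finsupp.eq_zero_of_map_add_of_map_single {α M G : Type*} [AddZeroClass M] [AddGroup G]
    (f : (α →₀ M) → G) (map_add : ∀ x y, f (x + y) = f x + f y)
    (map_single : ∀ a b, f (Finsupp.single a b) = 0) (x : α →₀ M) : f x = 0 := by
  have map_zero : f 0 = 0 := by simpa using map_add 0 0
  induction x using Finsupp.induction_linear with
  | zero => exact map_zero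
  | add x y hx hy => rw [map_add, hx, hy, add_zero]
  | single a b => exact map_single a b

theorem ddet_eq_zero_of_add_eq_zero {m n : ℤ × ℤ} (h : m + n = 0) : ddet n m = 0 := by
  obtain rfl := eq_neg_of_add_eq_zero_left h
  simp only [ddet, Prod.fst_neg, Prod.snd_neg]
  ring

theorem vbr_add_left (x x' y : (ℤ × ℤ) →₀ ℂ) : vbr (x + x') y = vbr x y + vbr x' y := by
  unfold vbr
  rw [Finsupp.sum_add_index' (by simp)]
  intro m a a'
  rw [← Finsupp.sum_add]
  exact Finsupp.sum_congr fun n _ => by rw [← add_smul, add_mul, add_mul]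

theorem vbr_add_right (x y y' : (ℤ × ℤ) →₀ ℂ) : vbr x (y + y') = vbr x y + vbr x y' := by
  unfold vbr
  rw [← Finsupp.sum_add]
  refine Finsupp.sum_congr fun m _ => Finsupp.sum_add_index' (by simp) fun n b b' => ?_
  rw [← add_smul, mul_add, add_mul]

theorem vbr_single_single (m n : ℤ × ℤ) (a b : ℂ) :
    vbr (Finsupp.single m a) (Finsupp.single n b) =
      Finsupp.single (m + n) (a * b * (ddet n m : ℂ)) := by
  unfold vbr Efun
  rw [Finsupp.sum_single_index (by simp), Finsupp.sum_single_index (by simp)]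
  split_ifs with h
  · simp [h, ddet_eq_zero_of_add_eq_zero h]
  · simp

section

variable (c3 c4 : ℂ)

theorem psi_add_left (x x' y : (ℤ × ℤ) →₀ ℂ) :
    psi c3 c4 (x + x') y = psi c3 c4 x y + psi c3 c4 x' y := by
  unfold psi
  rw [Finsupp.sum_add_index' (by simp)]
  intro m a a'
  rw [← Finsupp.sum_add]
  exact Finsupp.sum_congr fun n _ => by ring

theorem psi_add_right (x y y' : (ℤ × ℤ) →₀ ℂ) :
    psi c3 c4 x (y + y') = psi c3 c4 x y + psi c3 c4 x y' := by
  unfold psi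
  rw [← Finsupp.sum_add]
  exact Finsupp.sum_congr fun m _ => Finsupp.sum_add_index' (by simp) fun n b b' => by ring

theorem psi_single_single (m n : ℤ × ℤ) (a b : ℂ) :
    psi c3 c4 (Finsupp.single m a) (Finsupp.single n b) =
      a * b * (if m + n = 0 then (m.1 : ℂ) * c3 + (m.2 : ℂ) * c4 else 0) := by
  unfold psi
  rw [Finsupp.sum_single_index (by simp), Finsupp.sum_single_index (by simp)]

theorem psi_single_add_psi_single (m n : ℤ × ℤ) (a b : ℂ) :
    psi c3 c4 (Finsupp.single m a) (Finsupp.single n b) +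
      psi c3 c4 (Finsupp.single n b) (Finsupp.single m a) = 0 := by
  rw [psi_single_single, psi_single_single, add_comm n m]
  split_ifs with h
  · obtain rfl := eq_neg_of_add_eq_zero_left h
    push_cast [Prod.fst_neg, Prod.snd_neg]
    ring
  · ring

theorem psi_antisymm (x y : (ℤ × ℤ) →₀ ℂ) : psi c3 c4 x y = -psi c3 c4 y x := by
  rw [eq_neg_iff_add_eq_zero]
  revert x
  refine Finsupp.eq_zero_of_map_add_of_map_single _
    (fun x x' => by rw [psi_add_left, psi_add_right]; abel) fun m a => ?_
  revert y
  refine Finsupp.eq_zero_of_map_add_of_map_single _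
    (fun y y' => by rw [psi_add_left, psi_add_right]; abel) fun n b => ?_
  exact psi_single_add_psi_single c3 c4 m n a b

theorem psi_cyclic_single (m n p : ℤ × ℤ) (a b c : ℂ) :
    psi c3 c4 (vbr (Finsupp.single m a) (Finsupp.single n b)) (Finsupp.single p c) +
      psi c3 c4 (vbr (Finsupp.single n b) (Finsupp.single p c)) (Finsupp.single m a) +
      psi c3 c4 (vbr (Finsupp.single p c) (Finsupp.single m a)) (Finsupp.single n b) = 0 := by
  have h₂ : n + p + m = m + n + p := by abel
  have h₃ : p + m + n = m + n + p := by abel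
  simp only [vbr_single_single, psi_single_single, h₂, h₃]
  split_ifs with h
  · obtain rfl := eq_neg_of_add_eq_zero_right h
    simp only [ddet, Prod.fst_add, Prod.snd_add, Prod.fst_neg, Prod.snd_neg]
    push_cast
    ring
  · ring

theorem psi_vbr_cyclic (x y z : (ℤ × ℤ) →₀ ℂ) :
    psi c3 c4 (vbr x y) z + psi c3 c4 (vbr y z) x + psi c3 c4 (vbr z x) y = 0 := by
  revert x
  refine Finsupp.eq_zero_of_map_add_of_map_single _ (fun x x' => by
    simp only [vbr_add_left, vbr_add_right, psi_add_left, psi_add_right]; abel) fun m a => ?_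
  revert y
  refine Finsupp.eq_zero_of_map_add_of_map_single _ (fun y y' => by
    simp only [vbr_add_left, vbr_add_right, psi_add_left, psi_add_right]; abel) fun n b => ?_
  revert z
  refine Finsupp.eq_zero_of_map_add_of_map_single _ (fun z z' => by
    simp only [vbr_add_left, vbr_add_right, psi_add_left, psi_add_right]; abel) fun p c => ?_
  exact psi_cyclic_single c3 c4 m n p a b c

end

theorem psi_is_two_cocycle (c3 c4 : ℂ) :
    (∀ x y : (ℤ × ℤ) →₀ ℂ, psi c3 c4 x y = -psi c3 c4 y x) ∧
    (∀ x y z : (ℤ × ℤ) →₀ ℂ,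
      psi c3 c4 (vbr x y) z + psi c3 c4 (vbr y z) x + psi c3 c4 (vbr z x) y = 0) :=
  ⟨psi_antisymm c3 c4, psi_vbr_cyclic c3 c4⟩

end
end

section
/- Let {b1, b2} be a ℤ-basis of ℤ² and let L be the rank-two Heisenberg–Virasoro algebra. Then the Lie subalgebra of L generated by the three elements E(b1), E(b2), t^{b1} contains E(i·b1 + j·b2) and t^{i·b1 + j·b2} for all integers i, j ≥ 1. -/
/-- Index set for the basis of the rank-two Heisenberg–Virasoro algebra `L`:
`Sum.inl (true, m)` indexes `E(m)`, `Sum.inl (false, m)` indexes `t^m` (for `m ≠ 0`),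
and `Sum.inr j` indexes the central elements `K_{j+1}`, `j = 0,1,2,3`. -/
abbrev LIdx := (Bool × (ℤ × ℤ)) ⊕ (Fin 4)

/-- The underlying ℂ-vector space of the rank-two Heisenberg–Virasoro algebra `L`. -/
abbrev HV := LIdx →₀ ℂ

noncomputable section

/-- The element `E(m)`, with `E(0) := 0`. -/
def Ee (m : ℤ × ℤ) : HV :=
  if m = 0 then 0 else Finsupp.single (Sum.inl (true, m)) 1

/-- The element `t^m`, with `t^0 := 0`. -/
def tm (m : ℤ × ℤ) : HV :=
  if m = 0 then 0 else Finsupp.single (Sum.inl (false, m)) 1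

/-- The central elements `K_1, K_2, K_3, K_4`. -/
def Kk (j : Fin 4) : HV := Finsupp.single (Sum.inr j) 1

/-- `h(m) = m1·K1 + m2·K2`. -/
def hh (m : ℤ × ℤ) : HV := m.1 • Kk 0 + m.2 • Kk 1

/-- `f(m) = m1·K3 + m2·K4`. -/
def ff (m : ℤ × ℤ) : HV := m.1 • Kk 2 + m.2 • Kk 3

/-- The bracket of `L` on basis elements:
`[t^m, t^n] = 0`, `[K_i, L] = 0`,
`[t^m, E(n)] = det(n;m)·t^{m+n} + δ_{m+n,0}·h(m)`,
`[E(m), E(n)] = det(n;m)·E(m+n) + δ_{m+n,0}·f(m)`. -/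
def brB : LIdx → LIdx → HV
  | Sum.inl (true, m), Sum.inl (true, n) =>
      (ddet n m) • Ee (m + n) + (if m + n = 0 then ff m else 0)
  | Sum.inl (false, m), Sum.inl (true, n) =>
      (ddet n m) • tm (m + n) + (if m + n = 0 then hh m else 0)
  | Sum.inl (true, m), Sum.inl (false, n) =>
      -((ddet m n) • tm (n + m) + (if n + m = 0 then hh n else 0))
  | Sum.inl (false, _), Sum.inl (false, _) => 0
  | Sum.inr _, _ => 0
  | _, Sum.inr _ => 0

/-- The bracket of `L`, extended bilinearly to all of `L`. -/
def br (x y : HV) : HV :=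
  x.sum fun i a => y.sum fun j b => (a * b) • brB i j

end

/-- `{b1, b2}` is a ℤ-basis of ℤ². -/
def IsZBasis (b1 b2 : ℤ × ℤ) : Prop :=
  ∀ v : ℤ × ℤ, ∃! c : ℤ × ℤ, c.1 • b1 + c.2 • b2 = v

/-- Membership in the Lie subalgebra of `L` generated by a set `S`:
the smallest subspace containing `S` and closed under the bracket. -/
inductive genBy (S : Set HV) : HV → Prop
  | base {x : HV} : x ∈ S → genBy S x
  | zero : genBy S 0
  | add {x y : HV} : genBy S x → genBy S y → genBy S (x + y)
  | smul (c : ℂ) {x : HV} : genBy S x → genBy S (c • x)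
  | lie {x y : HV} : genBy S x → genBy S y → genBy S (br x y)


section Aux

lemma br_single (a b : LIdx) : br (Finsupp.single a 1) (Finsupp.single b 1) = brB a b := by
  simp [br, Finsupp.sum_single_index]

lemma br_Ee_Ee {m n : ℤ × ℤ} (hm : m ≠ 0) (hn : n ≠ 0) (hmn : m + n ≠ 0) :
    br (Ee m) (Ee n) = (ddet n m) • Ee (m + n) := by
  rw [Ee, Ee, if_neg hm, if_neg hn, br_single]
  simp [brB, if_neg hmn]

lemma br_tm_Ee {m n : ℤ × ℤ} (hm : m ≠ 0) (hn : n ≠ 0) (hmn : m + n ≠ 0) :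
    br (tm m) (Ee n) = (ddet n m) • tm (m + n) := by
  rw [tm, Ee, if_neg hm, if_neg hn, br_single]
  simp [brB, if_neg hmn]

lemma genBy_cancel {S : Set HV} {x : HV} (c : ℤ) (hc : c ≠ 0) (h : genBy S (c • x)) :
    genBy S x := by
  have h2 := genBy.smul ((c : ℂ)⁻¹) h
  rwa [← Int.cast_smul_eq_zsmul ℂ, inv_smul_smul₀ (by exact_mod_cast hc)] at h2

lemma ddet_ne_zero {b1 b2 : ℤ × ℤ} (hbasis : IsZBasis b1 b2) : ddet b1 b2 ≠ 0 := by
  intro hd0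
  obtain ⟨c, hc, -⟩ := hbasis (1, 0)
  obtain ⟨c', hc', -⟩ := hbasis (0, 1)
  have h1 := congrArg Prod.fst hc
  have h2 := congrArg Prod.snd hc
  have h3 := congrArg Prod.fst hc'
  have h4 := congrArg Prod.snd hc'
  simp [Prod.smul_fst, Prod.smul_snd] at h1 h2 h3 h4
  rw [ddet] at hd0
  have : (1:ℤ) = 0 := by
    linear_combination -((c'.1*b1.2 + c'.2*b2.2) * h1) + (c'.1*b1.1 + c'.2*b2.1)*h2
      - h4 + (c.1*c'.2 - c.2*c'.1)*hd0
  omega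

end Aux


theorem generated_subalgebra_contains_positive_cone
    (b1 b2 : ℤ × ℤ) (hbasis : IsZBasis b1 b2) (i j : ℤ) (hi : 1 ≤ i) (hj : 1 ≤ j) :
    genBy {Ee b1, Ee b2, tm b1} (Ee (i • b1 + j • b2)) ∧
    genBy {Ee b1, Ee b2, tm b1} (tm (i • b1 + j • b2)) := by
  set S : Set HV := {Ee b1, Ee b2, tm b1} with hS
  have hEb1 : genBy S (Ee b1) := genBy.base (by simp [hS])
  have hEb2 : genBy S (Ee b2) := genBy.base (by simp [hS])
  have htb1 : genBy S (tm b1) := genBy.base (by simp [hS])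
  have hd : ddet b1 b2 ≠ 0 := ddet_ne_zero hbasis
  -- any nontrivial combination is nonzero
  have hzero : ∀ p q : ℤ, p • b1 + q • b2 = 0 → p = 0 ∧ q = 0 := by
    intro p q hpq
    obtain ⟨c0, h0, hu⟩ := hbasis 0
    have e1 : ((p, q) : ℤ × ℤ) = c0 := hu (p, q) hpq
    have e2 : ((0, 0) : ℤ × ℤ) = c0 := hu (0, 0) (by simp)
    rw [← e2] at e1
    exact ⟨congrArg Prod.fst e1, congrArg Prod.snd e1⟩
  have hne : ∀ p q : ℤ, ¬(p = 0 ∧ q = 0) → p • b1 + q • b2 ≠ 0 :=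
    fun p q h hc => h (hzero p q hc)
  have hb1 : b1 ≠ 0 := by
    have := hne 1 0 (by omega); simpa using this
  have hb2 : b2 ≠ 0 := by
    have := hne 0 1 (by omega); simpa using this
  -- determinant computations
  have hdet1 : ∀ p q : ℤ, ddet b1 (p • b1 + q • b2) = q * ddet b1 b2 := by
    intro p q; simp [ddet, Prod.smul_fst, Prod.smul_snd]; ring
  have hdet2 : ∀ p q : ℤ, ddet b2 (p • b1 + q • b2) = -(p * ddet b1 b2) := by
    intro p q; simp [ddet, Prod.smul_fst, Prod.smul_snd]; ring
  have hdet3 : ∀ p q : ℤ, ddet (p • b1 + q • b2) b1 = -(q * ddet b1 b2) := by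
    intro p q; simp [ddet, Prod.smul_fst, Prod.smul_snd]; ring
  have hdet4 : ∀ p q : ℤ, ddet (p • b1 + q • b2) b2 = p * ddet b1 b2 := by
    intro p q; simp [ddet, Prod.smul_fst, Prod.smul_snd]; ring
  -- E-chain, i = 1 case
  have hE1 : ∀ j : ℤ, 1 ≤ j → genBy S (Ee ((1:ℤ) • b1 + j • b2)) := by
    refine Int.le_induction ?_ ?_
    ·
      have hsum : b1 + b2 = (1:ℤ) • b1 + (1:ℤ) • b2 := by module
      have hb12 : b1 + b2 ≠ 0 := by rw [hsum]; exact hne 1 1 (by omega)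
      have hbr := br_Ee_Ee hb1 hb2 hb12
      rw [hsum] at hbr
      have hb := genBy.lie hEb1 hEb2
      rw [hbr] at hb
      refine genBy_cancel _ ?_ hb
      have : ddet b2 b1 = -ddet b1 b2 := by rw [ddet, ddet]; ring
      rw [this]; omega
    · intro j hj ih
      have hn : (1:ℤ) • b1 + j • b2 ≠ 0 := hne 1 j (by omega)
      have hsum : b2 + ((1:ℤ) • b1 + j • b2) = (1:ℤ) • b1 + (j + 1) • b2 := by module
      have hmn : b2 + ((1:ℤ) • b1 + j • b2) ≠ 0 := by
        rw [hsum]; exact hne 1 (j + 1) (by omega)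
      have hbr := br_Ee_Ee hb2 hn hmn
      rw [hsum, hdet4 1 j] at hbr
      have hb := genBy.lie hEb2 ih
      rw [hbr] at hb
      refine genBy_cancel _ ?_ hb
      simpa using hd
  -- E-chain, general i
  have hE : ∀ i : ℤ, 1 ≤ i → ∀ j : ℤ, 1 ≤ j → genBy S (Ee (i • b1 + j • b2)) := by
    refine Int.le_induction hE1 ?_
    intro i hi ih j hj
    have hn : i • b1 + j • b2 ≠ 0 := hne i j (by omega)
    have hsum : b1 + (i • b1 + j • b2) = (i + 1) • b1 + j • b2 := by module
    have hmn : b1 + (i • b1 + j • b2) ≠ 0 := by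
      rw [hsum]; exact hne (i + 1) j (by omega)
    have hbr := br_Ee_Ee hb1 hn hmn
    rw [hsum, hdet3 i j] at hbr
    have hb := genBy.lie hEb1 (ih j hj)
    rw [hbr] at hb
    refine genBy_cancel _ ?_ hb
    simp only [neg_ne_zero]
    exact mul_ne_zero (by omega) hd
  -- t-chain, i = 1 case
  have ht1 : ∀ j : ℤ, 1 ≤ j → genBy S (tm ((1:ℤ) • b1 + j • b2)) := by
    refine Int.le_induction ?_ ?_
    ·
      have hsum : b1 + b2 = (1:ℤ) • b1 + (1:ℤ) • b2 := by module
      have hb12 : b1 + b2 ≠ 0 := by rw [hsum]; exact hne 1 1 (by omega)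
      have hbr := br_tm_Ee hb1 hb2 hb12
      rw [hsum] at hbr
      have hb := genBy.lie htb1 hEb2
      rw [hbr] at hb
      refine genBy_cancel _ ?_ hb
      have : ddet b2 b1 = -ddet b1 b2 := by rw [ddet, ddet]; ring
      rw [this]; omega
    · intro j hj ih
      have hm : (1:ℤ) • b1 + j • b2 ≠ 0 := hne 1 j (by omega)
      have hsum : ((1:ℤ) • b1 + j • b2) + b2 = (1:ℤ) • b1 + (j + 1) • b2 := by module
      have hmn : ((1:ℤ) • b1 + j • b2) + b2 ≠ 0 := by
        rw [hsum]; exact hne 1 (j + 1) (by omega)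
      have hbr := br_tm_Ee hm hb2 hmn
      rw [hsum, hdet2 1 j] at hbr
      have hb := genBy.lie ih hEb2
      rw [hbr] at hb
      refine genBy_cancel _ ?_ hb
      simp only [neg_ne_zero]
      exact mul_ne_zero one_ne_zero hd
  -- t-chain, general i
  have ht : ∀ i : ℤ, 1 ≤ i → ∀ j : ℤ, 1 ≤ j → genBy S (tm (i • b1 + j • b2)) := by
    refine Int.le_induction ht1 ?_
    intro i hi ih j hj
    have hm : i • b1 + j • b2 ≠ 0 := hne i j (by omega)
    have hsum : (i • b1 + j • b2) + b1 = (i + 1) • b1 + j • b2 := by module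
    have hmn : (i • b1 + j • b2) + b1 ≠ 0 := by
      rw [hsum]; exact hne (i + 1) j (by omega)
    have hbr := br_tm_Ee hm hb1 hmn
    rw [hsum, hdet1 i j] at hbr
    have hb := genBy.lie (ih j hj) hEb1
    rw [hbr] at hb
    refine genBy_cancel _ ?_ hb
    exact mul_ne_zero (by omega) hd
  exact ⟨hE i hi j hj, ht i hi j hj⟩
end

section
/- Let H be the Heisenberg Lie algebra with basis {x_k : k ∈ ℤ \ {0}} ∪ {c}, brackets [x_k, x_l] = δ_{k+l,0}·k·c and c central. Fix 0 ≠ a ∈ ℂ and let M⁺(a) be the induced module U(H) ⊗_{U(H⁺ ⊕ ℂc)} ℂv_a, where H⁺ = span{x_k : k ≥ 1}, x_k·v_a = 0 for k ≥ 1, and c·v_a = a·v_a. Then M⁺(a) is an irreducible H-module. -/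
/-!
Since `a ≠ 0`, the subspace `W` is stable under every partial derivative `∂/∂x_{-k}`. In
characteristic zero a nonconstant polynomial has a nonzero partial derivative, of smaller total
degree, so a nonzero element of `W` of least total degree is a nonzero constant and `1 ∈ W`.
Multiplication by the variables then generates the whole polynomial ring from `1`.
-/

open MvPolynomial

namespace MvPolynomial

variable {σ R : Type*}

section CommSemiring

variable [CommSemiring R]

theorem totalDegree_pderiv_le (i : σ) (p : MvPolynomial σ R) :
    (pderiv i p).totalDegree ≤ p.totalDegree - 1 := by
  refine Finset.sup_le fun m hm => ?_
  have hshift : m + Finsupp.single i 1 ∈ p.support := by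
    rw [mem_support_iff, coeff_pderiv] at hm
    exact mem_support_iff.mpr (left_ne_zero_of_mul hm)
  have hsum : ((m + Finsupp.single i 1).sum fun _ e => e) = (m.sum fun _ e => e) + 1 := by
    rw [Finsupp.sum_add_index' (fun _ => rfl) (fun _ _ _ => rfl), Finsupp.sum_single_index rfl]
  have := le_totalDegree hshift
  omega

theorem exists_pderiv_ne_zero [NoZeroDivisors R] [CharZero R] {p : MvPolynomial σ R}
    (hp : p.totalDegree ≠ 0) : ∃ i, pderiv i p ≠ 0 := by
  obtain ⟨d, hd, i, hi⟩ : ∃ d ∈ p.support, ∃ i, d i ≠ 0 := by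
    by_contra! h
    exact hp ((totalDegree_eq_zero_iff σ p).mpr h)
  refine ⟨i, fun h => ?_⟩
  have hcoeff := congrArg (coeff (d - Finsupp.single i 1)) h
  have hle : Finsupp.single i 1 ≤ d := Finsupp.single_le_iff.mpr (Nat.one_le_iff_ne_zero.mpr hi)
  rw [coeff_pderiv, tsub_add_cancel_of_le hle, coeff_zero] at hcoeff
  exact mul_ne_zero (mem_support_iff.mp hd) (Nat.cast_add_one_ne_zero _) hcoeff

theorem eq_top_of_one_mem_of_X_mul_mem (W : Submodule R (MvPolynomial σ R))
    (hmul : ∀ i, ∀ p ∈ W, X i * p ∈ W) (hone : 1 ∈ W) : W = ⊤ := by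
  rw [eq_top_iff]
  rintro p -
  induction p using MvPolynomial.induction_on with
  | C c => simpa [smul_eq_C_mul] using W.smul_mem c hone
  | add p q hp hq => exact W.add_mem hp hq
  | mul_X p i hp => simpa [mul_comm] using hmul i p hp

end CommSemiring

theorem one_mem_of_pderiv_mem {K : Type*} [Field K] [CharZero K]
    (W : Submodule K (MvPolynomial σ K)) (hder : ∀ i, ∀ p ∈ W, pderiv i p ∈ W) (hW : W ≠ ⊥) :
    1 ∈ W := by
  obtain ⟨p, hpW, hp0⟩ := Submodule.exists_mem_ne_zero_of_ne_bot hW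
  induction hn : p.totalDegree using Nat.strong_induction_on generalizing p with
  | _ n ih =>
    rcases Nat.eq_zero_or_pos n with rfl | hpos
    · obtain ⟨c, rfl⟩ : ∃ c, p = C c := ⟨_, totalDegree_eq_zero_iff_eq_C.mp hn⟩
      have hc : c ≠ 0 := fun hc => hp0 (by rw [hc, C_0])
      simpa [smul_eq_C_mul, ← C_mul, hc] using W.smul_mem c⁻¹ hpW
    · obtain ⟨i, hi⟩ := exists_pderiv_ne_zero (hn ▸ hpos.ne')
      have hlt : (pderiv i p).totalDegree < n := by
        have := totalDegree_pderiv_le i p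
        omega
      exact ih _ hlt _ (hder i p hpW) hi rfl

end MvPolynomial

theorem heisenberg_highest_weight_module_irreducible_general
    (a : ℂ) (ha : a ≠ 0) (W : Submodule ℂ (MvPolynomial ℕ ℂ))
    (hmul : ∀ k : ℕ, ∀ p ∈ W, X k * p ∈ W)
    (hder : ∀ k : ℕ, ∀ p ∈ W, (a * ((k : ℂ) + 1)) • pderiv k p ∈ W)
    (hW : W ≠ ⊥) : W = ⊤ := by
  have hpderiv : ∀ k, ∀ p ∈ W, pderiv k p ∈ W := fun k p hp =>
    (W.smul_mem_iff (mul_ne_zero ha (Nat.cast_add_one_ne_zero k))).mp (hder k p hp)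
  exact eq_top_of_one_mem_of_X_mul_mem W hmul (one_mem_of_pderiv_mem W hpderiv hW)

/-- Irreducibility of the induced Heisenberg module `M⁺(a)`, realized concretely:
`M⁺(a) ≅ ℂ[x_{-1}, x_{-2}, …]` (here `MvPolynomial ℕ ℂ`, with variable `k`
standing for `x_{-(k+1)}`), where `x_{-(k+1)}` acts as multiplication by the
variable `X k`, `x_{k+1}` acts as `a·(k+1)·∂/∂x_{-(k+1)}`, and the central
element `c` acts as the scalar `a`.  Any nonzero subspace closed under all these
operators is the whole module. -/
theorem heisenberg_highest_weight_module_irreducible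
    (a : ℂ) (ha : a ≠ 0) (W : Submodule ℂ (MvPolynomial ℕ ℂ))
    (hmul : ∀ k : ℕ, ∀ p ∈ W, X k * p ∈ W)
    (hder : ∀ k : ℕ, ∀ p ∈ W, (a * ((k : ℂ) + 1)) • pderiv k p ∈ W)
    (hcen : ∀ p ∈ W, a • p ∈ W)
    (hW : W ≠ ⊥) : W = ⊤ :=
  heisenberg_highest_weight_module_irreducible_general a ha W hmul hder hW
end

section
/- Let V be an irreducible weight module over the rank-two Heisenberg–Virasoro algebra extended by degree derivations, and suppose there is a ℤ-basis {b1, b2} of ℤ² and a nonzero weight vector v with E(b1)·v = E(b2)·v = t^{b1}·v = 0. Then V is a generalized highest weight module: there is a ℤ-basis {b1', b2'} of ℤ² (namely b1' = 2·b1 + b2, b2' = 3·b1 + b2) and a nonzero weight vector w with E(m)·w = t^m·w = 0 for all m ∈ ℤ≥0·b1' + ℤ≥0·b2' with m ≠ 0, and V = U(L̃)·w. -/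
/-- Index set for the basis of `L̃ = L ⊕ ℂd1 ⊕ ℂd2`: `Sum.inr i` indexes `d_{i+1}`. -/
abbrev LtIdx := LIdx ⊕ (Fin 2)

/-- The underlying ℂ-vector space of `L̃`. -/
abbrev Lt := LtIdx →₀ ℂ

noncomputable section

/-- The embedding of `L` into `L̃`. -/
def emb (x : HV) : Lt := Finsupp.mapDomain Sum.inl x

/-- The bracket of `L̃` on basis elements: the bracket of `L`, together with
`[d_i, E(m)] = m_i·E(m)`, `[d_i, t^m] = m_i·t^m`, `[d_i, K_j] = 0`, `[d1, d2] = 0`. -/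
def brTB : LtIdx → LtIdx → Lt
  | Sum.inl i, Sum.inl j => emb (brB i j)
  | Sum.inr i, Sum.inl (Sum.inl (b, m)) =>
      (if i = (0 : Fin 2) then m.1 else m.2) •
        Finsupp.single (Sum.inl (Sum.inl (b, m))) (1 : ℂ)
  | Sum.inl (Sum.inl (b, m)), Sum.inr i =>
      -((if i = (0 : Fin 2) then m.1 else m.2) •
        Finsupp.single (Sum.inl (Sum.inl (b, m))) (1 : ℂ))
  | _, _ => 0

/-- The bracket of `L̃`, extended bilinearly. -/
def brT (x y : Lt) : Lt :=
  x.sum fun i a => y.sum fun j b => (a * b) • brTB i j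

/-- The Cartan-type elements `d1, d2, K1, K2, K3, K4` of `L̃`, as indices. -/
def dIdx : Fin 6 → LtIdx
  | 0 => Sum.inr 0
  | 1 => Sum.inr 1
  | 2 => Sum.inl (Sum.inr 0)
  | 3 => Sum.inl (Sum.inr 1)
  | 4 => Sum.inl (Sum.inr 2)
  | 5 => Sum.inl (Sum.inr 3)

end

/-- helper: bracket of single basis elements. -/
lemma brT_single' (i j : LtIdx) (a b : ℂ) :
    brT (Finsupp.single i a) (Finsupp.single j b) = (a * b) • brTB i j := by
  unfold brT
  rw [Finsupp.sum_single_index, Finsupp.sum_single_index] <;>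
    simp [Finsupp.sum_single_index]

lemma emb_single' (i : LIdx) (a : ℂ) :
    emb (Finsupp.single i a) = Finsupp.single (Sum.inl i) a := by
  simp [emb, Finsupp.mapDomain_single]

lemma brT_EE' (m n : ℤ × ℤ) (hm : m ≠ 0) (hn : n ≠ 0) (hmn : m + n ≠ 0) :
    brT (emb (Ee m)) (emb (Ee n)) = ((ddet n m : ℤ) : ℂ) • emb (Ee (m + n)) := by
  rw [show Ee m = Finsupp.single (Sum.inl (true, m)) 1 from if_neg hm,
      show Ee n = Finsupp.single (Sum.inl (true, n)) 1 from if_neg hn,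
      emb_single', emb_single', brT_single']
  show (1 * 1 : ℂ) • emb (brB (Sum.inl (true, m)) (Sum.inl (true, n))) = _
  rw [show brB (Sum.inl (true, m)) (Sum.inl (true, n)) = (ddet n m) • Ee (m + n) from by
        simp [brB, if_neg hmn]]
  simp only [one_mul, one_smul, emb, Finsupp.mapDomain_smul, Int.cast_smul_eq_zsmul]

lemma brT_tE' (m n : ℤ × ℤ) (hm : m ≠ 0) (hn : n ≠ 0) (hmn : m + n ≠ 0) :
    brT (emb (tm m)) (emb (Ee n)) = ((ddet n m : ℤ) : ℂ) • emb (tm (m + n)) := by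
  rw [show tm m = Finsupp.single (Sum.inl (false, m)) 1 from if_neg hm,
      show Ee n = Finsupp.single (Sum.inl (true, n)) 1 from if_neg hn,
      emb_single', emb_single', brT_single']
  show (1 * 1 : ℂ) • emb (brB (Sum.inl (false, m)) (Sum.inl (true, n))) = _
  rw [show brB (Sum.inl (false, m)) (Sum.inl (true, n)) = (ddet n m) • tm (m + n) from by
        simp [brB, if_neg hmn]]
  simp only [one_mul, one_smul, emb, Finsupp.mapDomain_smul, Int.cast_smul_eq_zsmul]

theorem ghw_from_three_annihilators
    (V : Type*) [AddCommGroup V] [Module ℂ V]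
    -- V is a module over L̃
    (act : Lt →ₗ[ℂ] Module.End ℂ V)
    (hrep : ∀ x y : Lt, act (brT x y) = act x * act y - act y * act x)
    -- V is a weight module: the sum of the simultaneous eigenspaces of
    -- d1, d2, K1, K2, K3, K4 is all of V
    (hweight : (⨆ lam : Fin 6 → ℂ,
      ⨅ i : Fin 6,
        Module.End.eigenspace (act (Finsupp.single (dIdx i) 1)) (lam i)) = ⊤)
    -- V is irreducible
    (hirr : ∀ U : Submodule ℂ V, (∀ x : Lt, ∀ u ∈ U, act x u ∈ U) → U = ⊥ ∨ U = ⊤)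
    (b1 b2 : ℤ × ℤ) (hbasis : IsZBasis b1 b2)
    -- a nonzero weight vector killed by E(b1), E(b2), t^{b1}
    (v : V) (hv : v ≠ 0) (lam : Fin 6 → ℂ)
    (hvwt : v ∈ ⨅ i : Fin 6,
      Module.End.eigenspace (act (Finsupp.single (dIdx i) 1)) (lam i))
    (h1 : act (emb (Ee b1)) v = 0) (h2 : act (emb (Ee b2)) v = 0)
    (h3 : act (emb (tm b1)) v = 0) :
    -- then V is a GHW module w.r.t. the ℤ-basis {2b1+b2, 3b1+b2}
    IsZBasis ((2 : ℤ) • b1 + b2) ((3 : ℤ) • b1 + b2) ∧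
    ∃ (w : V) (mu : Fin 6 → ℂ), w ≠ 0 ∧
      w ∈ (⨅ i : Fin 6,
        Module.End.eigenspace (act (Finsupp.single (dIdx i) 1)) (mu i)) ∧
      (∀ i j : ℤ, 0 ≤ i → 0 ≤ j → ¬(i = 0 ∧ j = 0) →
        act (emb (Ee (i • ((2 : ℤ) • b1 + b2) + j • ((3 : ℤ) • b1 + b2)))) w = 0 ∧
        act (emb (tm (i • ((2 : ℤ) • b1 + b2) + j • ((3 : ℤ) • b1 + b2)))) w = 0) ∧
      (∀ U : Submodule ℂ V, (∀ x : Lt, ∀ u ∈ U, act x u ∈ U) → w ∈ U → U = ⊤) := by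

  classical
  -- nondegeneracy facts about the basis
  obtain ⟨x, hx, -⟩ := hbasis (1, 0)
  obtain ⟨y, hy, -⟩ := hbasis (0, 1)
  have hx1 : x.1 * b1.1 + x.2 * b2.1 = 1 := by
    have := congrArg Prod.fst hx; simpa [smul_eq_mul] using this
  have hx2 : x.1 * b1.2 + x.2 * b2.2 = 0 := by
    have := congrArg Prod.snd hx; simpa [smul_eq_mul] using this
  have hy1 : y.1 * b1.1 + y.2 * b2.1 = 0 := by
    have := congrArg Prod.fst hy; simpa [smul_eq_mul] using this
  have hy2 : y.1 * b1.2 + y.2 * b2.2 = 1 := by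
    have := congrArg Prod.snd hy; simpa [smul_eq_mul] using this
  have hd0 : ddet b1 b2 ≠ 0 := by
    intro h0
    have hkey : (x.1 * y.2 - x.2 * y.1) * (b1.1 * b2.2 - b1.2 * b2.1) = 1 := by
      linear_combination (y.1 * b1.2 + y.2 * b2.2) * hx1 + hy2 -
        (x.1 * b1.2 + x.2 * b2.2) * hy1
    rw [show b1.1 * b2.2 - b1.2 * b2.1 = ddet b1 b2 from rfl, h0, mul_zero] at hkey
    exact absurd hkey (by norm_num)
  have hne : ∀ a b : ℤ, ¬(a = 0 ∧ b = 0) → a • b1 + b • b2 ≠ (0 : ℤ × ℤ) := by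
    intro a b hab h
    obtain ⟨c, -, hu⟩ := hbasis 0
    have e1 := hu (a, b) h
    have e2 := hu (0, 0) (by simp)
    have : ((a, b) : ℤ × ℤ) = (0, 0) := e1.trans e2.symm
    simp only [Prod.mk.injEq] at this
    exact hab this
  have hb1ne : b1 ≠ 0 := by
    have := hne 1 0 (by norm_num); simpa using this
  have hb2ne : b2 ≠ 0 := by
    have := hne 0 1 (by norm_num); simpa using this
  have ddet_b1 : ∀ a b : ℤ, ddet (a • b1 + b • b2) b1 = -b * ddet b1 b2 := by
    intro a b; simp only [ddet, Prod.fst_add, Prod.snd_add, Prod.smul_fst,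
      Prod.smul_snd, smul_eq_mul]; ring
  have ddet_b2 : ∀ a b : ℤ, ddet (a • b1 + b • b2) b2 = a * ddet b1 b2 := by
    intro a b; simp only [ddet, Prod.fst_add, Prod.snd_add, Prod.smul_fst,
      Prod.smul_snd, smul_eq_mul]; ring
  -- the key annihilation-transfer lemma
  have key : ∀ (xx yy zz : Lt) (c : ℤ), c ≠ 0 → brT xx yy = ((c : ℤ) : ℂ) • zz →
      act xx v = 0 → act yy v = 0 → act zz v = 0 := by
    intro xx yy zz c hc hb hxv hyv
    have h := hrep xx yy
    rw [hb] at h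
    have h2 : act (((c : ℤ) : ℂ) • zz) v = 0 := by
      rw [h]; simp [LinearMap.sub_apply, Module.End.mul_apply, hxv, hyv]
    rw [map_smul, LinearMap.smul_apply] at h2
    rcases smul_eq_zero.mp h2 with h' | h'
    · exact absurd (Int.cast_eq_zero.mp h') hc
    · exact h'
  have hEE : ∀ m n : ℤ × ℤ, m ≠ 0 → n ≠ 0 → m + n ≠ 0 → ddet n m ≠ 0 →
      act (emb (Ee m)) v = 0 → act (emb (Ee n)) v = 0 →
      act (emb (Ee (m + n))) v = 0 := by
    intro m n hm hn hmn hd ha hb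
    exact key _ _ _ (ddet n m) hd (brT_EE' m n hm hn hmn) ha hb
  have htE : ∀ m n : ℤ × ℤ, m ≠ 0 → n ≠ 0 → m + n ≠ 0 → ddet n m ≠ 0 →
      act (emb (tm m)) v = 0 → act (emb (Ee n)) v = 0 →
      act (emb (tm (m + n))) v = 0 := by
    intro m n hm hn hmn hd ha hb
    exact key _ _ _ (ddet n m) hd (brT_tE' m n hm hn hmn) ha hb
  -- E(a b1 + b2) kills v for a ≥ 0
  have L1n : ∀ k : ℕ, act (emb (Ee ((k : ℤ) • b1 + (1 : ℤ) • b2))) v = 0 := by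
    intro k
    induction k with
    | zero => simpa using h2
    | succ k ih =>
      have hsum : b1 + ((k : ℤ) • b1 + (1 : ℤ) • b2)
          = ((k : ℤ) + 1) • b1 + (1 : ℤ) • b2 := by module
      have hc : ddet ((k : ℤ) • b1 + (1 : ℤ) • b2) b1 ≠ 0 := by
        rw [ddet_b1]; intro h; exact hd0 (by omega)
      have hres := hEE b1 _ hb1ne (hne (k : ℤ) 1 (by omega))
        (by rw [hsum]; exact hne ((k : ℤ) + 1) 1 (by omega)) hc h1 ih
      rw [hsum] at hres
      have hcast : ((k + 1 : ℕ) : ℤ) = (k : ℤ) + 1 := by push_cast; ring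
      rw [hcast]
      exact hres
  have L1 : ∀ a : ℤ, 0 ≤ a → act (emb (Ee (a • b1 + (1 : ℤ) • b2))) v = 0 := by
    intro a ha
    obtain ⟨k, hk⟩ : ∃ k : ℕ, a = (k : ℤ) := ⟨a.toNat, by omega⟩
    rw [hk]; exact L1n k
  -- E(a b1 + b b2) kills v for a ≥ 1, b ≥ 1
  have L2n : ∀ k : ℕ, ∀ a : ℤ, 1 ≤ a →
      act (emb (Ee (a • b1 + ((k : ℤ) + 1) • b2))) v = 0 := by
    intro k
    induction k with
    | zero =>
      intro a ha
      have h01 : ((0 : ℕ) : ℤ) + 1 = (1 : ℤ) := by norm_num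
      rw [h01]
      exact L1 a (by omega)
    | succ k ih =>
      intro a ha
      have hsum : b2 + (a • b1 + ((k : ℤ) + 1) • b2)
          = a • b1 + (((k : ℤ) + 1) + 1) • b2 := by module
      have hc : ddet (a • b1 + ((k : ℤ) + 1) • b2) b2 ≠ 0 := by
        rw [ddet_b2]; intro h
        exact hd0 ((mul_eq_zero.mp h).resolve_left (by omega))
      have hres := hEE b2 _ hb2ne (hne a ((k : ℤ) + 1) (by omega))
        (by rw [hsum]; exact hne a (((k : ℤ) + 1) + 1) (by omega)) hc h2 (ih a ha)
      rw [hsum] at hres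
      have hcast : ((k + 1 : ℕ) : ℤ) + 1 = ((k : ℤ) + 1) + 1 := by push_cast; ring
      rw [hcast]
      exact hres
  have L2 : ∀ b : ℤ, 1 ≤ b → ∀ a : ℤ, 1 ≤ a →
      act (emb (Ee (a • b1 + b • b2))) v = 0 := by
    intro b hb a ha
    obtain ⟨k, hk⟩ : ∃ k : ℕ, b = (k : ℤ) + 1 := ⟨(b - 1).toNat, by omega⟩
    rw [hk]; exact L2n k a ha
  -- t^((a+1) b1 + b b2) kills v for a ≥ 1, b ≥ 1
  have L3 : ∀ a b : ℤ, 1 ≤ a → 1 ≤ b →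
      act (emb (tm ((a + 1) • b1 + b • b2))) v = 0 := by
    intro a b ha hb
    have hsum : b1 + (a • b1 + b • b2) = (a + 1) • b1 + b • b2 := by module
    have hc : ddet (a • b1 + b • b2) b1 ≠ 0 := by
      rw [ddet_b1]; intro h
      exact hd0 ((mul_eq_zero.mp h).resolve_left (by omega))
    have hres := htE b1 _ hb1ne (hne a b (by omega))
      (by rw [hsum]; exact hne (a + 1) b (by omega)) hc h3 (L2 b hb a ha)
    rw [hsum] at hres
    exact hres
  -- new basis
  have hZB : IsZBasis ((2 : ℤ) • b1 + b2) ((3 : ℤ) • b1 + b2) := by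
    intro u
    obtain ⟨c, hc, hcu⟩ := hbasis u
    refine ⟨(3 * c.2 - c.1, c.1 - 2 * c.2), ?_, ?_⟩
    · show (3 * c.2 - c.1) • ((2 : ℤ) • b1 + b2) +
        (c.1 - 2 * c.2) • ((3 : ℤ) • b1 + b2) = u
      rw [← hc]; module
    · rintro q hq
      have h' : (2 * q.1 + 3 * q.2) • b1 + (q.1 + q.2) • b2 = u := by
        rw [← hq]; module
      have hqe := hcu (2 * q.1 + 3 * q.2, q.1 + q.2) h'
      have e1 : 2 * q.1 + 3 * q.2 = c.1 := congrArg Prod.fst hqe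
      have e2 : q.1 + q.2 = c.2 := congrArg Prod.snd hqe
      apply Prod.ext <;> simp <;> omega
  refine ⟨hZB, v, lam, hv, hvwt, ?_, ?_⟩
  · intro i j hi hj hij
    have hcomb : i • ((2 : ℤ) • b1 + b2) + j • ((3 : ℤ) • b1 + b2) =
        (2 * i + 3 * j) • b1 + (i + j) • b2 := by module
    constructor
    · rw [hcomb]; exact L2 (i + j) (by omega) (2 * i + 3 * j) (by omega)
    · rw [hcomb]
      rw [show (2 * i + 3 * j : ℤ) = (2 * i + 3 * j - 1) + 1 from by ring]
      exact L3 (2 * i + 3 * j - 1) (i + j) (by omega) (by omega)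
  · intro U hU hvU
    rcases hirr U hU with h | h
    · rw [h] at hvU
      exact absurd ((Submodule.mem_bot ℂ).mp hvU) hv
    · exact h
end
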